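/- Let n ≥ 2, c > 0, and let L_u be the n×n Laplacian of the uniformly weighted line graph. For every integer k with 1 ≤ k ≤ n, the vector v_k ∈ ℝⁿ with entries v_k(j) = sin((2j−1)(2k−1)π/(4n)) for j = 1, …, n satisfies (L_u + 2c·e₁e₁ᵀ) v_k = 2c(1 − cos((2k−1)π/(2n))) v_k. Hence the DST-4 basis vectors are eigenvectors of the generalized graph Laplacian of the line graph with a self-loop of weight 2c at the first vertex. -/

import Mathlib

open Matrix Real

def lineLaplacian (n : ℕ) (c : ℝ) : Matrix (Fin n) (Fin n) ℝ :=
  Matrix.of fun i j =>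
    if i = j then (if i.val = 0 ∨ i.val = n - 1 then c else 2 * c)
    else if i.val + 1 = j.val ∨ j.val + 1 = i.val then -c else 0

/-!
Extend the vector to the integers by `f m = sin ((2m + 1) t)` with `t = (2k - 1)π / (4n)`.
An interior row of `L_u` applies the second difference `c (2 f j - f (j - 1) - f (j + 1))`, and
`sin (a - 2t) + sin (a + 2t) = 2 cos (2t) sin a` makes `f` an eigenfunction of it with eigenvalue
`2c (1 - cos 2t)`. The two boundary rows apply the same second difference provided the ghost
values satisfy `c f (-1) = (c - w) f 0` at a first vertex carrying a self-loop of weight `w`, and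
`f n = f (n - 1)` at the last vertex. For `w = 2c` the first condition is `f (-1) = -f 0`, which
holds because `sin` is odd; the second holds because `cos (2nt) = cos ((2k - 1)π / 2) = 0`.
-/

lemma lineLaplacian_apply {n : ℕ} (c : ℝ) (i j : Fin n) :
    lineLaplacian n c i j =
      (if j.val = i.val then (if i.val = 0 ∨ i.val = n - 1 then c else 2 * c) else 0)
        - (if j.val = i.val + 1 then c else 0) - (if j.val + 1 = i.val then c else 0) := by
  simp only [lineLaplacian, of_apply, Fin.ext_iff]
  split_ifs <;> first | (exfalso; omega) | ring

lemma Fin.sum_ite_val_eq {M : Type*} [AddCommMonoid M] {n : ℕ} (m : ℕ) (v : Fin n → M) :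
    ∑ i : Fin n, (if i.val = m then v i else 0) = if h : m < n then v ⟨m, h⟩ else 0 := by
  split_ifs with h
  · have hm : ∀ i : Fin n, (i.val = m) = (i = ⟨m, h⟩) := fun i => by rw [Fin.ext_iff]
    simp only [hm, Finset.sum_ite_eq', Finset.mem_univ, if_true]
  · exact Finset.sum_eq_zero fun i _ => if_neg (by omega)

lemma lineLaplacian_mulVec_apply {n : ℕ} (c : ℝ) (f : ℤ → ℝ) (j : Fin n) :
    (lineLaplacian n c *ᵥ fun i => f i) j =
      (if j.val = 0 ∨ j.val = n - 1 then c else 2 * c) * f j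
        - (if j.val + 1 < n then c * f (j + 1) else 0)
        - (if 1 ≤ j.val then c * f (j - 1) else 0) := by
  have hprev : ∀ i : ℕ, (i + 1 = j.val) = (1 ≤ j.val ∧ i = j.val - 1) := fun i => by
    apply propext; omega
  simp only [mulVec, dotProduct, lineLaplacian_apply, sub_mul, ite_mul, zero_mul,
    Finset.sum_sub_distrib, hprev, ite_and, Finset.sum_ite_irrel, Finset.sum_const_zero,
    Fin.sum_ite_val_eq, j.isLt, dite_true]
  split_ifs <;> first | (exfalso; omega) | (push_cast [Nat.cast_sub, *]; ring)

lemma lineLaplacian_add_single_mulVec_apply {n : ℕ} (hn : 1 < n) {c w : ℝ} {f : ℤ → ℝ}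
    (hleft : c * f (-1) = (c - w) * f 0) (hright : f n = f (n - 1)) (j : Fin n) :
    ((lineLaplacian n c + single (⟨0, by omega⟩ : Fin n) ⟨0, by omega⟩ w) *ᵥ
        fun i : Fin n => f i) j =
      c * (2 * f j - f (j - 1) - f (j + 1)) := by
  rw [add_mulVec, Pi.add_apply, lineLaplacian_mulVec_apply, single_mulVec, Function.update_apply]
  by_cases hfirst : j.val = 0
  · have hj : j = ⟨0, by omega⟩ := Fin.ext hfirst
    simp [hj, show 1 < n by omega]
    linear_combination hleft
  have hj : j ≠ ⟨0, by omega⟩ := fun h => hfirst (by simp [h])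
  by_cases hlast : j.val = n - 1
  · have hcast : ((j : ℕ) : ℤ) = n - 1 := by omega
    rw [hcast, sub_add_cancel]
    simp [hj, hlast, show 1 ≤ n - 1 by omega, show ¬ n - 1 + 1 < n by omega]
    linear_combination c * hright
  · simp [hj, hfirst, hlast, show j.val + 1 < n by omega, show 1 ≤ j.val by omega]
    ring

lemma sin_odd_mul_second_difference (c t x : ℝ) :
    c * (2 * sin ((2 * x + 1) * t) - sin ((2 * (x - 1) + 1) * t) - sin ((2 * (x + 1) + 1) * t)) =
      2 * c * (1 - cos (2 * t)) * sin ((2 * x + 1) * t) := by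
  have hrec := two_mul_sin_mul_cos ((2 * x + 1) * t) (2 * t)
  rw [show (2 * x + 1) * t - 2 * t = (2 * (x - 1) + 1) * t by ring,
    show (2 * x + 1) * t + 2 * t = (2 * (x + 1) + 1) * t by ring] at hrec
  linear_combination c * hrec

lemma sin_add_eq_sin_sub_of_cos_eq_zero {a : ℝ} (ha : cos a = 0) (b : ℝ) :
    sin (a + b) = sin (a - b) := by
  rw [sin_add, sin_sub, ha]
  ring

/-- DST-4 basis vectors are eigenvectors of the line graph Laplacian with a self-loop of weight `2c` at the first vertex. For `1 ≤ k ≤ n` the given vector is an eigenvector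
with the stated eigenvalue. -/
theorem dst4_eigenvectors (n : ℕ) (hn : 2 ≤ n) (c : ℝ)
    (k : ℕ) :
    (lineLaplacian n c + Matrix.single (⟨0, by omega⟩ : Fin n) ⟨0, by omega⟩ (2 * c)) *ᵥ
        (fun j : Fin n => Real.sin ((2 * (j : ℝ) + 1) * (2 * (k : ℝ) - 1) * Real.pi / (4 * n))) =
      (2 * c * (1 - Real.cos ((2 * (k : ℝ) - 1) * Real.pi / (2 * n)))) •
        (fun j : Fin n => Real.sin ((2 * (j : ℝ) + 1) * (2 * (k : ℝ) - 1) * Real.pi / (4 * n))) := by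
  have hn0 : (n : ℝ) ≠ 0 := by positivity
  set t : ℝ := (2 * k - 1) * π / (4 * n) with ht
  set f : ℤ → ℝ := fun m => sin ((2 * m + 1) * t) with hf
  have hvec : (fun j : Fin n => sin ((2 * (j : ℝ) + 1) * (2 * k - 1) * π / (4 * n))) =
      fun j : Fin n => f j := by
    funext j; simp only [hf, ht, Int.cast_natCast]; congr 1; ring
  have hleft : c * f (-1) = (c - 2 * c) * f 0 := by
    norm_num [hf]; ring
  have hright : f n = f (n - 1) := by
    have hcos : cos (2 * n * t) = 0 :=
      cos_eq_zero_iff.2 ⟨k - 1, by rw [ht]; field_simp; push_cast; ring⟩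
    simp only [hf]; push_cast
    convert sin_add_eq_sin_sub_of_cos_eq_zero hcos t using 2 <;> ring
  rw [hvec, show (2 * k - 1) * π / (2 * n) = 2 * t by rw [ht]; field_simp; ring]
  funext j
  rw [lineLaplacian_add_single_mulVec_apply hn hleft hright, Pi.smul_apply, smul_eq_mul]
  simp only [hf]; push_cast
  exact sin_odd_mul_second_difference c t j
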